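/- Let N be a pseudo-rank function on a *-regular ring R. Then N(rbar - sbar) <= 3 N(r - s) for all r, s in R, where rbar denotes the relative inverse of r. -/

import Mathlib

open scoped TensorProduct Kronecker

noncomputable section

namespace AraClaramunt

/-! ### Pseudo-rank functions and rank metric notions -/

/-- A pseudo-rank function on a unital ring. -/
structure IsPseudoRankFunction {R : Type*} [Ring R] (N : R → ℝ) : Prop where
  nonneg : ∀ x : R, 0 ≤ N x
  le_one : ∀ x : R, N x ≤ 1
  map_one : N 1 = 1
  subadditive : ∀ a b : R, N (a + b) ≤ N a + N b
  mul_le_left : ∀ a b : R, N (a * b) ≤ N a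
  mul_le_right : ∀ a b : R, N (a * b) ≤ N b
  add_of_orthogonal : ∀ e f : R, IsIdempotentElem e → IsIdempotentElem f →
    e * f = 0 → f * e = 0 → N (e + f) = N e + N f

/-- A rank function is a faithful pseudo-rank function. -/
def IsRankFunction {R : Type*} [Ring R] (N : R → ℝ) : Prop :=
  IsPseudoRankFunction N ∧ ∀ x : R, N x = 0 → x = 0

/-- Cauchy sequence for the pseudo-metric `d(x,y) = N (x - y)`. -/
def RankCauchy {R : Type*} [Ring R] (N : R → ℝ) (u : ℕ → R) : Prop :=
  ∀ ε : ℝ, 0 < ε → ∃ n₀ : ℕ, ∀ m n : ℕ, n₀ ≤ m → n₀ ≤ n → N (u m - u n) < ε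

/-- Convergence for the pseudo-metric `d(x,y) = N (x - y)`. -/
def RankTendsto {R : Type*} [Ring R] (N : R → ℝ) (u : ℕ → R) (x : R) : Prop :=
  ∀ ε : ℝ, 0 < ε → ∃ n₀ : ℕ, ∀ n : ℕ, n₀ ≤ n → N (u n - x) < ε

/-- Completeness with respect to the pseudo-metric `d(x,y) = N (x - y)`. -/
def RankComplete {R : Type*} [Ring R] (N : R → ℝ) : Prop :=
  ∀ u : ℕ → R, RankCauchy N u → ∃ x : R, RankTendsto N u x

/-- Density of a subset with respect to the pseudo-metric `d(x,y) = N (x - y)`. -/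
def RankDense {R : Type*} [Ring R] (N : R → ℝ) (S : Set R) : Prop :=
  ∀ x : R, ∀ ε : ℝ, 0 < ε → ∃ y ∈ S, N (x - y) < ε

/-- von Neumann regularity. -/
def VNRegular (R : Type*) [Ring R] : Prop :=
  ∀ x : R, ∃ y : R, x = x * y * x

/-- A continuous factor: a simple, von Neumann regular, right and left self-injective ring
admitting a rank function whose image is all of `[0,1]`. -/
def IsContinuousFactor (R : Type*) [Ring R] : Prop :=
  IsSimpleRing R ∧ VNRegular R ∧ Module.Injective R R ∧ Module.Injective Rᵐᵒᵖ Rᵐᵒᵖ ∧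
    ∃ N : R → ℝ, IsRankFunction N ∧ Set.range N = Set.Icc (0 : ℝ) 1

/-- An extremal pseudo-rank function: an extreme point of the convex set of all
pseudo-rank functions. -/
def IsExtremalPseudoRankFunction {R : Type*} [Ring R] (N : R → ℝ) : Prop :=
  N ∈ Set.extremePoints ℝ {S : R → ℝ | IsPseudoRankFunction S}

/-! ### Matricial and ultramatricial algebras -/

/-- A matricial `K`-algebra. -/
def IsMatricialAlgebra (K : Type*) [Field K] (A : Type*) [Ring A] [Algebra K A] : Prop :=
  ∃ (k : ℕ) (n : Fin (k + 1) → ℕ), (∀ i, 0 < n i) ∧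
    Nonempty (A ≃ₐ[K] ((i : Fin (k + 1)) → Matrix (Fin (n i)) (Fin (n i)) K))

/-- An ultramatricial `K`-algebra: the increasing union of matricial subalgebras. -/
def IsUltramatricialAlgebra (K : Type*) [Field K] (B : Type*) [Ring B] [Algebra K B] : Prop :=
  ∃ C : ℕ → Subalgebra K B, (∀ n, C n ≤ C (n + 1)) ∧
    (∀ n, IsMatricialAlgebra K (C n)) ∧ (∀ b : B, ∃ n, b ∈ C n)

/-- `Q`, with rank function `N`, is the rank-metric completion of a direct limit of the matrix
algebras `M_{p n}(K)`: it is complete and carries a dense increasing tower of unital subalgebras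
isomorphic to `M_{p n}(K)`. -/
def IsMatrixTowerCompletion (K : Type*) [Field K] (Q : Type*) [Ring Q] [Algebra K Q]
    (N : Q → ℝ) (p : ℕ → ℕ) : Prop :=
  IsRankFunction N ∧ RankComplete N ∧
    ∃ A : ℕ → Subalgebra K Q, (∀ n, A n ≤ A (n + 1)) ∧
      (∀ n, Nonempty ((A n) ≃ₐ[K] Matrix (Fin (p n)) (Fin (p n)) K)) ∧
      RankDense N (⋃ n, (A n : Set Q))

/-- `Q` is (a copy of) von Neumann's continuous factor `M_K`, the completion of
`lim_n M_{2^n}(K)` with respect to its unique rank function. -/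
def IsMK (K : Type*) [Field K] (Q : Type*) [Ring Q] [Algebra K Q] (N : Q → ℝ) : Prop :=
  IsMatrixTowerCompletion K Q N (fun n => 2 ^ n)

/-- The canonical block-diagonal unital embedding `M_a(K) → M_b(K)`, `z ↦ z ⊗ 1_g`,
where `b = a * g`. -/
def blockEmbedFun (K : Type*) [Semiring K] {a : ℕ} (g b : ℕ) (h : a * g = b)
    (z : Matrix (Fin a) (Fin a) K) : Matrix (Fin b) (Fin b) K :=
  Matrix.reindex (finProdFinEquiv.trans (finCongr h)) (finProdFinEquiv.trans (finCongr h))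
    (z ⊗ₖ (1 : Matrix (Fin g) (Fin g) K))

end AraClaramunt
namespace AraClaramunt

/-! ### Star notions -/

/-- Properness of an involution: `x* x = 0` implies `x = 0`. -/
def ProperStar (R : Type*) [NonUnitalNonAssocRing R] [Star R] : Prop :=
  ∀ x : R, star x * x = 0 → x = 0

/-- A projection: a self-adjoint idempotent. -/
def IsProjection {R : Type*} [Mul R] [Star R] (p : R) : Prop :=
  star p = p ∧ p * p = p

/-- The order on projections: `q ≤ p` iff `p q = q p = q`. -/
def ProjLE {R : Type*} [Mul R] (q p : R) : Prop :=
  p * q = q ∧ q * p = q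

/-- `*`-equivalence of projections: `e = w w*` and `f = w* w` for some `w`. -/
def StarEquivProj {R : Type*} [Mul R] [Star R] (e f : R) : Prop :=
  ∃ w : R, e = w * star w ∧ f = star w * w

/-- Equivalence of projections: `e = x y`, `f = y x` with `x ∈ eRf`, `y ∈ fRe`. -/
def EquivProj {R : Type*} [Mul R] (e f : R) : Prop :=
  ∃ x y : R, x = e * x * f ∧ y = f * y * e ∧ e = x * y ∧ f = y * x

/-- `y` is the relative inverse of `x` in a `*`-regular ring. -/
def IsRelativeInverse {R : Type*} [Mul R] [Star R] (x y : R) : Prop :=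
  x * y * x = x ∧ y * x * y = y ∧ star (x * y) = x * y ∧ star (y * x) = y * x

/-- `e = LP(x)`: `e` is a projection with `x R = e R`. -/
def IsLeftProjOf {R : Type*} [Mul R] [Star R] (x e : R) : Prop :=
  IsProjection e ∧ e * x = x ∧ ∃ y : R, e = x * y

/-- `f = RP(x)`: `f` is a projection with `R x = R f`. -/
def IsRightProjOf {R : Type*} [Mul R] [Star R] (x f : R) : Prop :=
  IsProjection f ∧ x * f = x ∧ ∃ y : R, f = y * x

/-- Positive definiteness of the involution of a field. -/
def PosDefStar (F : Type*) [Field F] [StarRing F] : Prop :=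
  ∀ (n : ℕ) (x : Fin n → F), (∑ i, star (x i) * x i) = 0 → ∀ i, x i = 0

/-- `*`-Pythagorean field. -/
def StarPythagorean (F : Type*) [Field F] [StarRing F] : Prop :=
  ∀ x y : F, ∃ z : F, x * star x + y * star y = z * star z

/-- A standard matricial `*`-algebra over `(F, *)`: a `*`-algebra `*`-isomorphic to a finite
product of matrix algebras `M_{n i}(F)` with the `*`-transpose involution. -/
def IsStandardMatricialStarAlgebra (F : Type*) [Field F] [StarRing F]
    (A : Type*) [Ring A] [Algebra F A] [StarRing A] [StarModule F A] : Prop :=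
  ∃ (k : ℕ) (n : Fin (k + 1) → ℕ), (∀ i, 0 < n i) ∧
    Nonempty (A ≃⋆ₐ[F] ((i : Fin (k + 1)) → Matrix (Fin (n i)) (Fin (n i)) F))

/-- A map `M_a(F) → M_b(F)` is standard (up to a permutation of the index set) if it is
`z ↦ diag(z, …, z)` (multiplicity `t`), suitably reindexed. -/
def IsStandardMatrixMap (F : Type*) [Field F] {a b : ℕ}
    (Φ : Matrix (Fin a) (Fin a) F → Matrix (Fin b) (Fin b) F) : Prop :=
  ∃ (t : ℕ) (E : Fin a × Fin t ≃ Fin b),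
    ∀ z, Φ z = Matrix.reindex E E (Matrix.blockDiagonal fun _ : Fin t => z)

/-- A map between finite products of matrix algebras over `F` is standard (block diagonal,
up to a permutation of the index sets): it is determined by multiplicities `t j i`, the `j`-th
component being the block-diagonal sum of `t j i` copies of the `i`-th component of the input. -/
def IsStandardBlockMap (F : Type*) [Field F] {k l : ℕ} (n : Fin (k + 1) → ℕ)
    (m : Fin (l + 1) → ℕ)
    (Φ : ((i : Fin (k + 1)) → Matrix (Fin (n i)) (Fin (n i)) F) →
      ((j : Fin (l + 1)) → Matrix (Fin (m j)) (Fin (m j)) F)) : Prop :=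
  ∃ t : Fin (l + 1) → Fin (k + 1) → ℕ,
    ∃ E : (j : Fin (l + 1)) →
      ((Σ c : (Σ i : Fin (k + 1), Fin (t j i)), Fin (n c.1)) ≃ Fin (m j)),
      ∀ z j, Φ z j =
        Matrix.reindex (E j) (E j)
          (Matrix.blockDiagonal' fun c : (Σ i : Fin (k + 1), Fin (t j i)) => z c.1)

end AraClaramunt
namespace AraClaramunt

/-!
In any ring `r̄ - s̄ = s̄ (s - r) r̄ + (1 - s̄ s) r̄ - s̄ (1 - r r̄)`, and each of the three terms has
rank at most `N (r - s)`. For the first this is immediate. For the other two one uses that in a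
`*`-regular ring `x*` lies in `R x x*`, so that `N (x*) = N x`: passing to adjoints moves the
projections `r̄ r` and `s s̄` to the other side, where they absorb a factor `r - s`.
-/

section

variable {R : Type*} [Ring R]

namespace IsPseudoRankFunction

variable {N : R → ℝ} (hN : IsPseudoRankFunction N)
include hN

theorem map_mul_mul_le (a x b : R) : N (a * x * b) ≤ N x :=
  (hN.mul_le_left _ _).trans (hN.mul_le_right _ _)

theorem map_neg (x : R) : N (-x) = N x := by
  have hle : ∀ y : R, N (-y) ≤ N y := fun y => by
    simpa using hN.mul_le_right (-1) y
  exact le_antisymm (hle x) (by simpa using hle (-x))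

theorem map_sub_comm (a b : R) : N (a - b) = N (b - a) := by
  rw [← neg_sub, hN.map_neg]

theorem map_sub_le (a b : R) : N (a - b) ≤ N a + N b := by
  simpa only [sub_eq_add_neg, hN.map_neg] using hN.subadditive a (-b)

end IsPseudoRankFunction

section StarRegular

variable [StarRing R]

theorem exists_mul_mul_star_eq_star (hreg : VNRegular R) (hproper : ProperStar R) (x : R) :
    ∃ z : R, z * x * star x = star x := by
  obtain ⟨y, hy⟩ := hreg (x * star x)
  refine ⟨star x * y, sub_eq_zero.mp (hproper _ ?_)⟩
  calc star (star x * y * x * star x - star x) * (star x * y * x * star x - star x)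
      = (x * star x * star y - 1) * (x * star x * y * (x * star x) - x * star x) := by
        simp only [star_sub, star_mul, star_star]
        noncomm_ring
    _ = 0 := by rw [← hy, sub_self, mul_zero]

theorem IsPseudoRankFunction.map_star (hreg : VNRegular R) (hproper : ProperStar R)
    {N : R → ℝ} (hN : IsPseudoRankFunction N) (x : R) : N (star x) = N x := by
  have hle : ∀ y : R, N (star y) ≤ N y := fun y => by
    obtain ⟨z, hz⟩ := exists_mul_mul_star_eq_star hreg hproper y
    calc N (star y) = N (z * y * star y) := by rw [hz]
      _ ≤ N (z * y) := hN.mul_le_left _ _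
      _ ≤ N y := hN.mul_le_right _ _
  exact le_antisymm (hle x) (by simpa using hle (star x))

namespace IsRelativeInverse

variable {x y : R}

theorem star (h : IsRelativeInverse x y) : IsRelativeInverse (star x) (star y) := by
  obtain ⟨hxyx, hyxy, hxy, hyx⟩ := h
  refine ⟨?_, ?_, ?_, ?_⟩
  · simpa only [star_mul, mul_assoc] using congrArg Star.star hxyx
  · simpa only [star_mul, mul_assoc] using congrArg Star.star hyxy
  · rw [← star_mul, star_star, hyx]
  · rw [← star_mul, star_star, hxy]

theorem mul_one_sub_mul_eq_zero (h : IsRelativeInverse x y) : x * (1 - y * x) = 0 := by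
  rw [mul_sub, mul_one, ← mul_assoc, h.1, sub_self]

/-- With the projections `p = r̄ r` and `q = s̄ s`, the element `(1 - q) r̄ = (1 - q) p r̄` has
rank at most that of `(1 - q) p`, whose adjoint is `p (1 - q) = r̄ (r - s) (1 - q)` because
`s (1 - q) = 0`. -/
theorem map_one_sub_mul_le (hreg : VNRegular R) (hproper : ProperStar R)
    {N : R → ℝ} (hN : IsPseudoRankFunction N) {r rbar s sbar : R}
    (hr : IsRelativeInverse r rbar) (hs : IsRelativeInverse s sbar) :
    N ((1 - sbar * s) * rbar) ≤ N (r - s) := by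
  have hproj : (1 - sbar * s) * rbar = (1 - sbar * s) * (rbar * r) * rbar := by
    rw [mul_assoc _ (rbar * r), hr.2.1]
  have hadj : Star.star ((1 - sbar * s) * (rbar * r)) = rbar * (r - s) * (1 - sbar * s) := by
    rw [star_mul, hr.2.2.2, star_sub, star_one, hs.2.2.2, mul_sub rbar r s, sub_mul,
      mul_assoc rbar s, hs.mul_one_sub_mul_eq_zero, mul_zero, sub_zero]
  calc N ((1 - sbar * s) * rbar) ≤ N ((1 - sbar * s) * (rbar * r)) := by
        rw [hproj]; exact hN.mul_le_left _ _
    _ = N (rbar * (r - s) * (1 - sbar * s)) := by rw [← hadj, hN.map_star hreg hproper]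
    _ ≤ N (r - s) := hN.map_mul_mul_le _ _ _

end IsRelativeInverse

end StarRegular

end

/-- **Lemma 4.3(b)** (Ara–Claramunt). For a pseudo-rank function `N` on a `*`-regular ring,
`N (r̄ - s̄) ≤ 3 N (r - s)`, where `r̄` denotes the relative inverse. -/
theorem statement8 (R : Type) [Ring R] [StarRing R]
    (hreg : VNRegular R) (hproper : ProperStar R)
    (N : R → ℝ) (hN : IsPseudoRankFunction N)
    (r s rbar sbar : R)
    (hr : IsRelativeInverse r rbar) (hs : IsRelativeInverse s sbar) :
    N (rbar - sbar) ≤ 3 * N (r - s) := by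
  have hdecomp : rbar - sbar =
      sbar * (s - r) * rbar + ((1 - sbar * s) * rbar - sbar * (1 - r * rbar)) := by
    noncomm_ring
  have hmiddle : N (sbar * (s - r) * rbar) ≤ N (r - s) :=
    (hN.map_mul_mul_le _ _ _).trans_eq (hN.map_sub_comm s r)
  have hleft : N ((1 - sbar * s) * rbar) ≤ N (r - s) :=
    hr.map_one_sub_mul_le hreg hproper hN hs
  -- the adjoint of `s̄ (1 - r r̄)` is the left-hand term for the pairs `(s*, s̄*)` and `(r*, r̄*)`
  have hright : N (sbar * (1 - r * rbar)) ≤ N (r - s) := by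
    have hadj : star (sbar * (1 - r * rbar)) = (1 - star rbar * star r) * star sbar := by
      rw [star_mul, star_sub, star_one, star_mul]
    calc N (sbar * (1 - r * rbar)) = N ((1 - star rbar * star r) * star sbar) := by
          rw [← hadj, hN.map_star hreg hproper]
      _ ≤ N (star s - star r) := hs.star.map_one_sub_mul_le hreg hproper hN hr.star
      _ = N (r - s) := by rw [← star_sub, hN.map_star hreg hproper, hN.map_sub_comm]
  calc N (rbar - sbar)
      ≤ N (sbar * (s - r) * rbar) + N ((1 - sbar * s) * rbar - sbar * (1 - r * rbar)) := by
        rw [hdecomp]; exact hN.subadditive _ _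
    _ ≤ N (sbar * (s - r) * rbar) + (N ((1 - sbar * s) * rbar) + N (sbar * (1 - r * rbar))) := by
        gcongr; exact hN.map_sub_le _ _
    _ ≤ 3 * N (r - s) := by linarith

end AraClaramunt
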